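/- Let q be a prime number, p a prime with p ≠ q, F an algebraically closed field of characteristic p, ζ ∈ F a primitive q-th root of unity, and ξ ∈ ℂ a primitive q-th root of unity. Then for every integer k ≥ 0: (i) A(k, ξ) ⊆ A(k, ζ) as subsets of ℕ^q; and (ii) card A(k, ζ) − card A(k, ξ) = q·(number of σ-orbits on A(k, ζ) − number of σ-orbits on A(k, ξ)). In the paper's notation, d(k, q, p) − d(k, q) = q·(a(k, q, p) − a(k, q)) when q = n+1 is prime. -/

import Mathlib

/-- `Aset m k η` is the set of multi-indices `I = (I_0, …, I_{m−1}) ∈ ℕ^m` with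
`I_0 + ⋯ + I_{m−1} = k` and `I_0 + I_1·η + ⋯ + I_{m−1}·η^{m−1} = 0` in `L`. -/
def Aset (m k : ℕ) {L : Type*} [CommRing L] (η : L) : Set (Fin m → ℕ) :=
  {I | (∑ i, I i) = k ∧ (∑ i : Fin m, (I i : L) * η ^ (i : ℕ)) = 0}

/-- The cyclic shift `σ(I_0, …, I_{m−1}) = (I_{m−1}, I_0, …, I_{m−2})` on `ℕ^m`. -/
def cshift (m : ℕ) (I : Fin m → ℕ) : Fin m → ℕ := fun i => I ((finRotate m).symm i)

/-- The number of orbits of the cyclic-shift action on a subset `A ⊆ ℕ^m`. -/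
noncomputable def orbitCount (m : ℕ) (A : Set (Fin m → ℕ)) : ℕ :=
  Set.ncard ((fun I => {J | ∃ n : ℕ, J = (cshift m)^[n] I}) '' A)

/-! Since `ζ ^ q = 1`, the shift `σ` multiplies `∑ I_i ζ^i` by `ζ`, so it permutes `A(k, ζ)`;
as `σ^q = id` with `q` prime, every `σ`-orbit has one or `q` elements. The fixed points of `σ`
are the constant multi-indices, and these lie in `A(k, η)` for every primitive `q`-th root `η`
in a domain because `1 + η + ⋯ + η^(q-1) = 0`. Conversely, the polynomial `∑ I_i X^i` of an
`I ∈ A(k, ξ)` is divisible by `Φ_q = 1 + X + ⋯ + X^(q-1)`, the minimal polynomial of `ξ` over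
`ℚ`, and has degree `< q`, so it is a constant multiple of `Φ_q` and `I` is constant. Thus
`A(k, ξ)` is the fixed-point set of `σ` on `A(k, ζ)`, and the rest of `A(k, ζ)` splits into
orbits of size `q`. -/

open Function Set

section IterateOrbit

variable {α : Type*} {f : α → α} {x y : α} {q : ℕ}

-- `orbitCount m A` is `(iterateOrbit (cshift m) '' A).ncard` by definition.
def iterateOrbit (f : α → α) (x : α) : Set α := {y | ∃ n : ℕ, y = f^[n] x}

theorem mem_iterateOrbit_self (f : α → α) (x : α) : x ∈ iterateOrbit f x := ⟨0, rfl⟩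

theorem iterateOrbit_of_isFixedPt (hx : IsFixedPt f x) : iterateOrbit f x = {x} := by
  ext y
  constructor
  · rintro ⟨n, rfl⟩
    exact hx.iterate n
  · rintro rfl
    exact mem_iterateOrbit_self f y

theorem iterateOrbit_eq_of_mem (hq : 0 < q) (hf : ∀ z, IsPeriodicPt f q z)
    (hy : y ∈ iterateOrbit f x) : iterateOrbit f y = iterateOrbit f x := by
  obtain ⟨n, rfl⟩ := hy
  have hx : x ∈ iterateOrbit f (f^[n] x) :=
    ⟨q * n - n, by rw [← iterate_add_apply, Nat.sub_add_cancel (Nat.le_mul_of_pos_left n hq),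
      ((hf x).mul_const n).eq]⟩
  ext z
  constructor
  · rintro ⟨k, rfl⟩
    exact ⟨k + n, (iterate_add_apply f k n x).symm⟩
  · rintro ⟨k, rfl⟩
    obtain ⟨l, hl⟩ := hx
    exact ⟨k + l, by rw [iterate_add_apply, ← hl]⟩

theorem iterateOrbit_eq_image_Iio (hx : x ∈ periodicPts f) :
    iterateOrbit f x = (f^[·] x) '' Iio (minimalPeriod f x) := by
  ext y
  constructor
  · rintro ⟨n, rfl⟩
    exact ⟨n % minimalPeriod f x, Nat.mod_lt _ (minimalPeriod_pos_of_mem_periodicPts hx),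
      iterate_mod_minimalPeriod_eq⟩
  · rintro ⟨n, -, rfl⟩
    exact ⟨n, rfl⟩

theorem ncard_iterateOrbit (hx : x ∈ periodicPts f) :
    (iterateOrbit f x).ncard = minimalPeriod f x := by
  rw [iterateOrbit_eq_image_Iio hx, iterate_injOn_Iio_minimalPeriod.ncard_image,
    ← Finset.coe_range, ncard_coe_finset, Finset.card_range]

theorem ncard_iterateOrbit_of_not_isFixedPt [hq : Fact q.Prime] (hx : IsPeriodicPt f q x)
    (hfix : ¬IsFixedPt f x) : (iterateOrbit f x).ncard = q := by
  rw [ncard_iterateOrbit ⟨q, hq.out.pos, hx⟩, minimalPeriod_eq_prime hx hfix]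

theorem injective_of_isPeriodicPt (hq : 0 < q) (hf : ∀ z, IsPeriodicPt f q z) : Injective f := by
  obtain ⟨n, rfl⟩ := Nat.exists_eq_add_one_of_ne_zero hq.ne'
  intro a b h
  rw [← (hf a).eq, ← (hf b).eq, iterate_succ_apply, iterate_succ_apply, h]

theorem ncard_eq_mul_ncard_image_iterateOrbit [hq : Fact q.Prime] (hf : ∀ z, IsPeriodicPt f q z)
    {U : Set α} (hU : U.Finite) (hUf : MapsTo f U U) (hfix : ∀ x ∈ U, ¬IsFixedPt f x) :
    U.ncard = q * (iterateOrbit f '' U).ncard := by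
  classical
  lift U to Finset α using hU
  rw [← Finset.coe_image, ncard_coe_finset, ncard_coe_finset,
    Finset.card_eq_sum_card_image (iterateOrbit f) U, Finset.sum_const_nat, mul_comm]
  intro o ho
  obtain ⟨x, hx, rfl⟩ := Finset.mem_image.1 ho
  have hfiber : (({y ∈ U | iterateOrbit f y = iterateOrbit f x} : Finset α) : Set α) =
      iterateOrbit f x := by
    ext y
    simp only [Finset.coe_filter, mem_ofPred_eq]
    constructor
    · rintro ⟨-, hy⟩
      exact hy ▸ mem_iterateOrbit_self f y
    · intro hy
      refine ⟨?_, iterateOrbit_eq_of_mem hq.out.pos hf hy⟩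
      obtain ⟨n, rfl⟩ := hy
      exact hUf.iterate n hx
  rw [← ncard_coe_finset, hfiber, ncard_iterateOrbit_of_not_isFixedPt (hf x) (hfix x hx)]

theorem ncard_sub_ncard_sep_isFixedPt [hq : Fact q.Prime] (hf : ∀ z, IsPeriodicPt f q z)
    {S : Set α} (hS : S.Finite) (hSf : MapsTo f S S) :
    (S.ncard : ℤ) - {x ∈ S | IsFixedPt f x}.ncard =
      q * ((iterateOrbit f '' S).ncard - (iterateOrbit f '' {x ∈ S | IsFixedPt f x}).ncard) := by
  set T := {x ∈ S | IsFixedPt f x}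
  have hTS : T ⊆ S := sep_subset S _
  have hinj := injective_of_isPeriodicPt hq.out.pos hf
  have hTf : MapsTo f (S \ T) (S \ T) := fun x hx =>
    ⟨hSf hx.1, fun hfx => hx.2 ⟨hx.1, hinj (hfx.2 : f (f x) = f x)⟩⟩
  have hmoved := ncard_eq_mul_ncard_image_iterateOrbit hf hS.sdiff hTf
    (fun x hx hfix => hx.2 ⟨hx.1, hfix⟩)
  have hdisj : Disjoint (iterateOrbit f '' T) (iterateOrbit f '' (S \ T)) := by
    rw [disjoint_iff_forall_ne]
    rintro - ⟨t, ht, rfl⟩ - ⟨u, hu, rfl⟩ htu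
    have : u ∈ iterateOrbit f t := htu ▸ mem_iterateOrbit_self f u
    rw [iterateOrbit_of_isFixedPt ht.2, mem_singleton_iff] at this
    exact hu.2 (this ▸ ht)
  have horbits : (iterateOrbit f '' S).ncard =
      (iterateOrbit f '' T).ncard + (iterateOrbit f '' (S \ T)).ncard := by
    rw [← ncard_union_eq hdisj ((hS.subset hTS).image _) (hS.sdiff.image _), ← image_union,
      union_sdiff_cancel hTS]
  have hfixed : (iterateOrbit f '' T).ncard = T.ncard := by
    refine InjOn.ncard_image fun t ht u hu htu => ?_
    have : t ∈ iterateOrbit f u := htu ▸ mem_iterateOrbit_self f t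
    rwa [iterateOrbit_of_isFixedPt hu.2, mem_singleton_iff] at this
  rw [← ncard_sdiff_add_ncard_of_subset hTS hS, hmoved, horbits, hfixed]
  push_cast
  ring

end IterateOrbit

open Fin.NatCast

section CyclicShift

variable {m : ℕ} [NeZero m]

theorem cshift_apply (I : Fin m → ℕ) (i : Fin m) : cshift m I i = I (i - 1) := by
  rw [cshift]
  congr 1
  rw [Equiv.symm_apply_eq, finRotate_apply, sub_add_cancel]

theorem iterate_cshift_apply (I : Fin m → ℕ) (n : ℕ) (i : Fin m) :
    (cshift m)^[n] I i = I (i - n) := by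
  induction n generalizing i with
  | zero => simp
  | succ n ih =>
    rw [iterate_succ_apply', cshift_apply, ih, Nat.cast_succ, sub_sub, add_comm]

theorem isPeriodicPt_cshift (I : Fin m → ℕ) : IsPeriodicPt (cshift m) m I := by
  funext i
  rw [iterate_cshift_apply, Fin.natCast_self, sub_zero]

theorem isFixedPt_cshift_iff {I : Fin m → ℕ} : IsFixedPt (cshift m) I ↔ ∀ i, I i = I 0 := by
  refine ⟨fun h i => ?_, fun h => funext fun i => by rw [cshift_apply, h, h i]⟩
  have := congrFun (h.iterate i) i
  rwa [iterate_cshift_apply, Fin.cast_val_eq_self, sub_self, eq_comm] at this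

end CyclicShift

section Aset

variable {m k : ℕ} {L : Type*} [CommRing L] {η : L}

theorem Aset_finite (m k : ℕ) (η : L) : (Aset m k η).Finite :=
  (Set.finite_Iic (fun _ => k : Fin m → ℕ)).subset fun I hI i =>
    hI.1 ▸ Finset.single_le_sum (fun j _ => Nat.zero_le (I j)) (Finset.mem_univ i)

theorem pow_val_add_one [NeZero m] (hη : η ^ m = 1) (j : Fin m) :
    η ^ ((j + 1 : Fin m) : ℕ) = η ^ (j : ℕ) * η := by
  rw [Fin.val_add, Fin.val_one', Nat.add_mod_mod, ← pow_eq_pow_mod _ hη, pow_succ]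

theorem mapsTo_cshift_Aset [NeZero m] (hη : η ^ m = 1) :
    MapsTo (cshift m) (Aset m k η) (Aset m k η) := by
  rintro I ⟨hsum, hrel⟩
  refine ⟨?_, ?_⟩
  · rw [← hsum]
    exact Fintype.sum_equiv (Equiv.subRight 1) _ _ (cshift_apply I)
  · calc ∑ i, (cshift m I i : L) * η ^ (i : ℕ)
        = ∑ j, (I j : L) * η ^ ((j + 1 : Fin m) : ℕ) :=
          Fintype.sum_equiv (Equiv.subRight 1) _ _ fun i => by
            rw [cshift_apply, Equiv.subRight_apply, sub_add_cancel]
      _ = (∑ j, (I j : L) * η ^ (j : ℕ)) * η := by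
          simp only [pow_val_add_one hη, Finset.sum_mul, mul_assoc]
      _ = 0 := by rw [hrel, zero_mul]

theorem mem_Aset_of_forall_eq [NeZero m] [IsDomain L] (hη : IsPrimitiveRoot η m) (hm : 1 < m)
    {I : Fin m → ℕ} (hsum : ∑ i, I i = k) (hI : ∀ i, I i = I 0) : I ∈ Aset m k η := by
  refine ⟨hsum, ?_⟩
  rw [Finset.sum_congr rfl fun i _ => by rw [hI i], ← Finset.mul_sum,
    Fin.sum_univ_eq_sum_range (η ^ ·), hη.geom_sum_eq_zero hm, mul_zero]

end Aset

section CharZero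

open Polynomial

theorem IsPrimitiveRoot.coeff_eq_coeff_zero_of_aeval_eq_zero {K : Type*} [Field K] [CharZero K]
    {q : ℕ} [hq : Fact q.Prime] {ξ : K} (hξ : IsPrimitiveRoot ξ q) {P : ℚ[X]}
    (hP : aeval ξ P = 0) (hdeg : P.degree < q) {i : ℕ} (hi : i < q) :
    P.coeff i = P.coeff 0 := by
  obtain ⟨g, rfl⟩ : cyclotomic q ℚ ∣ P :=
    cyclotomic_eq_minpoly_rat hξ hq.out.pos ▸ minpoly.dvd ℚ ξ hP
  have hg : g.natDegree = 0 := by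
    rcases eq_or_ne g 0 with rfl | hg0
    · exact natDegree_zero
    have hne := mul_ne_zero (cyclotomic_ne_zero q ℚ) hg0
    rw [← natDegree_lt_iff_degree_lt hne, natDegree_mul (cyclotomic_ne_zero q ℚ) hg0,
      natDegree_cyclotomic, Nat.totient_prime hq.out] at hdeg
    omega
  rw [eq_C_of_natDegree_eq_zero hg, coeff_mul_C, coeff_mul_C, cyclotomic_prime]
  simp [coeff_X_pow, hi, hq.out.pos]

theorem forall_eq_of_mem_Aset {K : Type*} [Field K] [CharZero K] {q k : ℕ} [Fact q.Prime]
    {ξ : K} (hξ : IsPrimitiveRoot ξ q) {I : Fin q → ℕ} (hI : I ∈ Aset q k ξ) :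
    ∀ i, I i = I 0 := by
  let P : Polynomial ℚ := ∑ i : Fin q, C (I i : ℚ) * X ^ (i : ℕ)
  have hcoeff (i : Fin q) : P.coeff i = I i := by
    simp [P, Fin.val_inj]
  have hP : aeval ξ P = 0 := by simpa [P] using hI.2
  intro i
  have := hξ.coeff_eq_coeff_zero_of_aeval_eq_zero hP (degree_sum_fin_lt _) i.isLt
  exact_mod_cast (hcoeff i).symm.trans (this.trans (hcoeff 0))

theorem Aset_eq_sep_isFixedPt {K L : Type*} [Field K] [CharZero K] [CommRing L] [IsDomain L]
    {q k : ℕ} [hq : Fact q.Prime] {ξ : K} {ζ : L} (hξ : IsPrimitiveRoot ξ q)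
    (hζ : IsPrimitiveRoot ζ q) : Aset q k ξ = {I ∈ Aset q k ζ | IsFixedPt (cshift q) I} := by
  ext I
  constructor
  · intro hI
    have hconst := forall_eq_of_mem_Aset hξ hI
    exact ⟨mem_Aset_of_forall_eq hζ hq.out.one_lt hI.1 hconst, isFixedPt_cshift_iff.2 hconst⟩
  · rintro ⟨hI, hfix⟩
    exact mem_Aset_of_forall_eq hξ hq.out.one_lt hI.1 (isFixedPt_cshift_iff.1 hfix)

end CharZero

theorem card_Aset_sub_card_Aset_eq_general (q : ℕ) (hq : q.Prime)
    (F : Type*) [Field F]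
    (ζ : F) (hζ : IsPrimitiveRoot ζ q) (ξ : ℂ) (hξ : IsPrimitiveRoot ξ q) (k : ℕ) :
    Aset q k ξ ⊆ Aset q k ζ ∧
      ((Aset q k ζ).ncard : ℤ) - ((Aset q k ξ).ncard : ℤ) =
        (q : ℤ) * ((orbitCount q (Aset q k ζ) : ℤ) - (orbitCount q (Aset q k ξ) : ℤ)) := by
  have : Fact q.Prime := ⟨hq⟩
  rw [Aset_eq_sep_isFixedPt hξ hζ]
  exact ⟨sep_subset _ _, ncard_sub_ncard_sep_isFixedPt isPeriodicPt_cshift (Aset_finite q k ζ)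
    (mapsTo_cshift_Aset hζ.pow_eq_one)⟩

/-- Let `q` be a prime, `p` a prime with `p ≠ q`, `F` an algebraically closed field of
characteristic `p`, `ζ ∈ F` a primitive `q`-th root of unity and `ξ ∈ ℂ` a primitive `q`-th
root of unity. Then for every `k ≥ 0`: (i) `A(k, ξ) ⊆ A(k, ζ)` as subsets of `ℕ^q`; and
(ii) `card A(k, ζ) − card A(k, ξ) = q·(#σ-orbits on A(k, ζ) − #σ-orbits on A(k, ξ))`. -/
theorem card_Aset_sub_card_Aset_eq (q p : ℕ) (hq : q.Prime) (hp : p.Prime) (hpq : p ≠ q)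
    (F : Type*) [Field F] [IsAlgClosed F] [CharP F p]
    (ζ : F) (hζ : IsPrimitiveRoot ζ q) (ξ : ℂ) (hξ : IsPrimitiveRoot ξ q) (k : ℕ) :
    Aset q k ξ ⊆ Aset q k ζ ∧
      ((Aset q k ζ).ncard : ℤ) - ((Aset q k ξ).ncard : ℤ) =
        (q : ℤ) * ((orbitCount q (Aset q k ζ) : ℤ) - (orbitCount q (Aset q k ξ) : ℤ)) :=
  card_Aset_sub_card_Aset_eq_general q hq F ζ hζ ξ hξ k
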